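/- Let f : G → H be a morphism of ∞-groupoids of type C. The following are equivalent: (3) Π_1(f) : Π_1(G) → Π_1(H) is an equivalence of groupoids and for every n ≥ 2 and every pair of parallel (n−1)-arrows u, v of G the induced map π_n(G, u, v) → π_n(H, f(u), f(v)) is a bijection; (4) Π_1(f) is full and essentially surjective, and for every n ≥ 2 and every pair of parallel (n−1)-arrows u, v of G the induced map π_n(G, u, v) → π_n(H, f(u), f(v)) is a surjection. -/

import Mathlib

/-!
STATEMENT 11: Let `f : G → H` be a morphism of ∞-groupoids of type `C`.  The
following are equivalent:
(3) `Π₁(f) : Π₁(G) → Π₁(H)` is an equivalence of groupoids (full, faithful and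
essentially surjective) and for every `n ≥ 2` and every pair of parallel
`(n-1)`-arrows `u, v` of `G` the induced map `π_n(G, u, v) → π_n(H, f(u), f(v))`
is a bijection;
(4) `Π₁(f)` is full and essentially surjective, and for every `n ≥ 2` and every
pair of parallel `(n-1)`-arrows `u, v` the induced map is a surjection.
All conditions on quotients are expressed at the level of representatives.
-/

open CategoryTheory Opposite

open CategoryTheory Opposite

universe w v u

/-- A coglobular object: a category under the globe category 𝔾. -/
structure Coglob (E : Type u) [Category.{v} E] where
  D : ℕ → E
  σ : ∀ n, D n ⟶ D (n + 1)
  τ : ∀ n, D n ⟶ D (n + 1)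
  relσ : ∀ n, σ n ≫ σ (n + 1) = σ n ≫ τ (n + 1)
  relτ : ∀ n, τ n ≫ σ (n + 1) = τ n ≫ τ (n + 1)

namespace Coglob

variable {E : Type u} [Category.{v} E] (Φ : Coglob E)

/-- Iterated cosource `σ^{j+k}_j : D j ⟶ D (j+k)`. -/
def σUp (j : ℕ) : ∀ k : ℕ, Φ.D j ⟶ Φ.D (j + k)
  | 0 => 𝟙 _
  | k + 1 => σUp j k ≫ Φ.σ (j + k)

/-- Iterated cotarget `τ^{j+k}_j : D j ⟶ D (j+k)`. -/
def τUp (j : ℕ) : ∀ k : ℕ, Φ.D j ⟶ Φ.D (j + k)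
  | 0 => 𝟙 _
  | k + 1 => τUp j k ≫ Φ.τ (j + k)

lemma τUp_σ (j k : ℕ) :
    Φ.τUp j (k + 1) ≫ Φ.σ (j + k + 1) = Φ.τUp j (k + 2) := by
  show (Φ.τUp j k ≫ Φ.τ (j + k)) ≫ Φ.σ (j + k + 1) =
    (Φ.τUp j k ≫ Φ.τ (j + k)) ≫ Φ.τ (j + k + 1)
  rw [Category.assoc, Category.assoc, Φ.relτ]

lemma σUp_τ (j k : ℕ) :
    Φ.σUp j (k + 1) ≫ Φ.τ (j + k + 1) = Φ.σUp j (k + 2) := by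
  show (Φ.σUp j k ≫ Φ.σ (j + k)) ≫ Φ.τ (j + k + 1) =
    (Φ.σUp j k ≫ Φ.σ (j + k)) ≫ Φ.σ (j + k + 1)
  rw [Category.assoc, Category.assoc, Φ.relσ]

/-- Iterated cosource `D 0 ⟶ D n`. -/
def σZero : ∀ n : ℕ, Φ.D 0 ⟶ Φ.D n
  | 0 => 𝟙 _
  | n + 1 => σZero n ≫ Φ.σ n

/-- Globular parallelism of two morphisms with source a globe `D n`. -/
def Par : ∀ {n : ℕ} {Y : E}, (Φ.D n ⟶ Y) → (Φ.D n ⟶ Y) → Prop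
  | 0, _, _, _ => True
  | m + 1, _, f, g => (Φ.σ m ≫ f = Φ.σ m ≫ g) ∧ (Φ.τ m ≫ f = Φ.τ m ≫ g)

end Coglob

/-- Tables of dimensions, indexed by the dimension of the first globe: the table
`cons j d e T` glues a disk of dimension `j + d + 1` along the dimension `j` onto a
table whose first dimension is `j + e + 1` (so that both dimensions exceed the
gluing dimension, as required for a table of dimensions). -/
inductive GTable : ℕ → Type where
  | single (i : ℕ) : GTable i
  | cons (j d e : ℕ) (T : GTable (j + e + 1)) : GTable (j + d + 1)

/-- Dimension of a table: the greatest dimension appearing in it. -/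
def GTable.dim : ∀ {i : ℕ}, GTable i → ℕ
  | _, .single i => i
  | _, .cons j d _ T => max (j + d + 1) T.dim

/-- Chosen globular sums on a category under 𝔾: for every table of dimensions, an
iterated amalgamated sum of globes, glued along iterated cosources and cotargets,
with its universal property. This is the structure of a globular extension. -/
structure GSums {E : Type u} [Category.{v} E] (Φ : Coglob E) where
  S : ∀ {i : ℕ}, GTable i → E
  single_eq : ∀ i, S (.single i) = Φ.D i
  ι : ∀ {i : ℕ} (T : GTable i), Φ.D i ⟶ S T
  ι_single : ∀ i, ι (.single i) = eqToHom (single_eq i).symm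
  ρ : ∀ {j d e : ℕ} (T : GTable (j + e + 1)), S T ⟶ S (.cons j d e T)
  glue : ∀ {j d e : ℕ} (T : GTable (j + e + 1)),
    Φ.σUp j (d + 1) ≫ ι (.cons j d e T) = Φ.τUp j (e + 1) ≫ ι T ≫ ρ T
  desc : ∀ {j d e : ℕ} (T : GTable (j + e + 1)) {Y : E}
    (f : Φ.D (j + d + 1) ⟶ Y) (g : S T ⟶ Y),
    Φ.σUp j (d + 1) ≫ f = Φ.τUp j (e + 1) ≫ ι T ≫ g → (S (.cons j d e T) ⟶ Y)
  ι_desc : ∀ {j d e : ℕ} (T : GTable (j + e + 1)) {Y : E}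
    (f : Φ.D (j + d + 1) ⟶ Y) (g : S T ⟶ Y) (h), ι (.cons j d e T) ≫ desc T f g h = f
  ρ_desc : ∀ {j d e : ℕ} (T : GTable (j + e + 1)) {Y : E}
    (f : Φ.D (j + d + 1) ⟶ Y) (g : S T ⟶ Y) (h), ρ T ≫ desc T f g h = g
  hom_ext : ∀ {j d e : ℕ} (T : GTable (j + e + 1)) {Y : E}
    (m m' : S (.cons j d e T) ⟶ Y),
    ι (.cons j d e T) ≫ m = ι (.cons j d e T) ≫ m' → ρ T ≫ m = ρ T ≫ m' → m = m'

namespace GSums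

variable {E : Type u} [Category.{v} E] {Φ : Coglob E} (GS : GSums Φ)

/-- The binary globular sum `D (j+k+1) ∐_{D j} D (j+k+1)`. -/
def Btab (j k : ℕ) : GTable (j + k + 1) := .cons j k k (.single (j + k + 1))

/-- First canonical morphism `ε₁ : D (j+k+1) ⟶ D (j+k+1) ∐_{D j} D (j+k+1)`. -/
def ε₁ (j k : ℕ) : Φ.D (j + k + 1) ⟶ GS.S (Btab j k) := GS.ι (Btab j k)

/-- Second canonical morphism `ε₂ : D (j+k+1) ⟶ D (j+k+1) ∐_{D j} D (j+k+1)`. -/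
def ε₂ (j k : ℕ) : Φ.D (j + k + 1) ⟶ GS.S (Btab j k) :=
  eqToHom (GS.single_eq (j + k + 1)).symm ≫ GS.ρ (GTable.single (j + k + 1))

/-- `C` is `(∞,0)`-contractible: every admissible pair admits a lifting; a pair
`(f, g) : D n ⟶ S` is admissible when `S` is a globular sum of dimension `≤ n + 1`
and `f, g` are globularly parallel. -/
def Contractible : Prop :=
  ∀ (n : ℕ) {i : ℕ} (T : GTable i), T.dim ≤ n + 1 →
    ∀ f g : Φ.D n ⟶ GS.S T, Φ.Par f g →
      ∃ h : Φ.D (n + 1) ⟶ GS.S T, Φ.σ n ≫ h = f ∧ Φ.τ n ≫ h = g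

/-- A presheaf `X` on `C` is a model (an ∞-groupoid of type `C`) when it sends each
globular sum to the corresponding iterated fiber product; equivalently each
amalgamation stage is sent to a pullback of sets. -/
def IsModel (X : Eᵒᵖ ⥤ Type w) : Prop :=
  ∀ {j d e : ℕ} (T : GTable (j + e + 1))
    (a : X.obj (op (Φ.D (j + d + 1)))) (b : X.obj (op (GS.S T))),
    X.map (Φ.σUp j (d + 1)).op a = X.map (Φ.τUp j (e + 1) ≫ GS.ι T).op b →
      ∃! x : X.obj (op (GS.S (.cons j d e T))),
        X.map (GS.ι (.cons j d e T)).op x = a ∧ X.map (GS.ρ T).op x = b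

/-- The amalgamated sum `f ∐_{D j} f` of an endo-cosimplicial-type map of globes. -/
def amalgMap (j k : ℕ) (f : Φ.D (j + k + 1) ⟶ Φ.D (j + k + 2))
    (hσ : Φ.σUp j (k + 1) ≫ f = Φ.σUp j (k + 2))
    (hτ : Φ.τUp j (k + 1) ≫ f = Φ.τUp j (k + 2)) :
    GS.S (Btab j k) ⟶ GS.S (Btab j (k + 1)) :=
  GS.desc (GTable.single (j + k + 1)) (f ≫ GS.ε₁ j (k + 1))
    (eqToHom (GS.single_eq (j + k + 1)) ≫ f ≫ GS.ε₂ j (k + 1)) (by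
      have h1 := GS.glue (j := j) (d := k + 1) (e := k + 1) (GTable.single (j + (k + 1) + 1))
      rw [GS.ι_single] at h1
      simp only [GS.ι_single, ← Category.assoc, hσ]
      simp only [Category.assoc, eqToHom_trans, eqToHom_refl, Category.id_comp]
      rw [← Category.assoc, hτ]
      exact h1)

/-- The amalgamated sum `σ ∐_{D j} σ`. -/
def amalgσ (j k : ℕ) : GS.S (Btab j k) ⟶ GS.S (Btab j (k + 1)) :=
  GS.amalgMap j k (Φ.σ (j + k + 1)) rfl (Φ.τUp_σ j k)

/-- The amalgamated sum `τ ∐_{D j} τ`. -/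
def amalgτ (j k : ℕ) : GS.S (Btab j k) ⟶ GS.S (Btab j (k + 1)) :=
  GS.amalgMap j k (Φ.τ (j + k + 1)) (Φ.σUp_τ j k) rfl

end GSums

/-- A pregroupoidal structure on a (contractible) globular extension: chosen
coherence morphisms `∇^i_j`, `κ_i` and `w^i_j` for compositions, units and inverses,
each a lifting of the corresponding admissible pair. -/
structure Pregroupoidal {E : Type u} [Category.{v} E] {Φ : Coglob E} (GS : GSums Φ) where
  nabla : ∀ j k, Φ.D (j + k + 1) ⟶ GS.S (GSums.Btab j k)
  kappa : ∀ n, Φ.D (n + 1) ⟶ Φ.D n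
  winv : ∀ j k, Φ.D (j + k + 1) ⟶ Φ.D (j + k + 1)
  kappa_σ : ∀ n, Φ.σ n ≫ kappa n = 𝟙 (Φ.D n)
  kappa_τ : ∀ n, Φ.τ n ≫ kappa n = 𝟙 (Φ.D n)
  nabla_σ₀ : ∀ j, Φ.σ j ≫ nabla j 0 = Φ.σ j ≫ GS.ε₂ j 0
  nabla_τ₀ : ∀ j, Φ.τ j ≫ nabla j 0 = Φ.τ j ≫ GS.ε₁ j 0
  nabla_σ : ∀ j k, Φ.σ (j + k + 1) ≫ nabla j (k + 1) = nabla j k ≫ GS.amalgσ j k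
  nabla_τ : ∀ j k, Φ.τ (j + k + 1) ≫ nabla j (k + 1) = nabla j k ≫ GS.amalgτ j k
  winv_σ₀ : ∀ j, Φ.σ j ≫ winv j 0 = Φ.τ j
  winv_τ₀ : ∀ j, Φ.τ j ≫ winv j 0 = Φ.σ j
  winv_σ : ∀ j k, Φ.σ (j + k + 1) ≫ winv j (k + 1) = winv j k ≫ Φ.σ (j + k + 1)
  winv_τ : ∀ j k, Φ.τ (j + k + 1) ≫ winv j (k + 1) = winv j k ≫ Φ.τ (j + k + 1)

section ModelOps

variable {E : Type u} [Category.{v} E] {Φ : Coglob E} {GS : GSums Φ}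
variable (X : Eᵒᵖ ⥤ Type w)

/-- The set of `n`-arrows of a globular presheaf. -/
def arr (n : ℕ) : Type w := X.obj (op (Φ.D n))

variable {X}

/-- Source of an `(n+1)`-arrow. -/
def asrc {n : ℕ} (u : arr (Φ := Φ) X (n + 1)) : arr (Φ := Φ) X n :=
  X.map (Φ.σ n).op u

/-- Target of an `(n+1)`-arrow. -/
def atgt {n : ℕ} (u : arr (Φ := Φ) X (n + 1)) : arr (Φ := Φ) X n :=
  X.map (Φ.τ n).op u

/-- Homotopy of `n`-arrows: existence of a connecting `(n+1)`-arrow. -/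
def Htp (n : ℕ) (u v : arr (Φ := Φ) X n) : Prop :=
  ∃ h : arr (Φ := Φ) X (n + 1), asrc h = u ∧ atgt h = v

/-- Composability in codimension `k+1`: the iterated `j`-source of `u` agrees with
the iterated `j`-target of `v`. -/
def Composable (j k : ℕ) (u v : arr (Φ := Φ) X (j + k + 1)) : Prop :=
  X.map (Φ.σUp j (k + 1)).op u = X.map (Φ.τUp j (k + 1)).op v

/-- The element of `X` of the binary globular sum determined by a composable pair,
via the model (fiber product) condition. -/
noncomputable def pairUp (hm : GS.IsModel X) {j k : ℕ}
    (u v : arr (Φ := Φ) X (j + k + 1)) (hc : Composable j k u v) :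
    X.obj (op (GS.S (GSums.Btab j k))) :=
  (hm (GTable.single (j + k + 1)) u
    (X.map (eqToHom (GS.single_eq (j + k + 1))).op v) (by
      rw [← types_comp_apply (X.map _) (X.map _) v, ← X.map_comp, ← op_comp, Category.assoc, GS.ι_single,
        eqToHom_trans, eqToHom_refl, Category.comp_id]
      exact hc)).exists.choose

/-- The composition `u *^{j+k+1}_j v` of arrows (`u` after `v`) induced by the chosen
morphism `∇^{j+k+1}_j`; defined as `u` on non-composable pairs. -/
noncomputable def gcomp (hm : GS.IsModel X) (P : Pregroupoidal GS)
    (j k : ℕ) (u v : arr (Φ := Φ) X (j + k + 1)) : arr (Φ := Φ) X (j + k + 1) := by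
  classical
  exact if hc : Composable j k u v then X.map (P.nabla j k).op (pairUp hm u v hc) else u

/-- The unit `(n+1)`-arrow on an `n`-arrow, induced by `κ_n`. -/
def gunit (P : Pregroupoidal GS) {n : ℕ} (u : arr (Φ := Φ) X n) :
    arr (Φ := Φ) X (n + 1) :=
  X.map (P.kappa n).op u

/-- The inverse `w^{j}_{j+k+1}` of an arrow. -/
def gwinv (P : Pregroupoidal GS) (j k : ℕ) (u : arr (Φ := Φ) X (j + k + 1)) :
    arr (Φ := Φ) X (j + k + 1) :=
  X.map (P.winv j k).op u

/-- Iterated counit `D n ⟶ D 0`. -/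
def kDown (P : Pregroupoidal GS) : ∀ n : ℕ, Φ.D n ⟶ Φ.D 0
  | 0 => 𝟙 _
  | n + 1 => P.kappa n ≫ kDown P n

/-- The iterated unit `n`-arrow on an object. -/
def unitIter (P : Pregroupoidal GS) (n : ℕ) (x : arr (Φ := Φ) X 0) :
    arr (Φ := Φ) X n :=
  X.map (kDown P n).op x

end ModelOps

section Stmt11

variable {E : Type u} [Category.{v} E] {Φ : Coglob E}
variable {X Y : Eᵒᵖ ⥤ Type w}

/-- `Π₁(f)` is full. -/
def Pi1Full (f : X ⟶ Y) : Prop :=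
  ∀ (a a' : arr (Φ := Φ) X 0) (β : arr (Φ := Φ) Y 1),
    asrc β = f.app (op (Φ.D 0)) a → atgt β = f.app (op (Φ.D 0)) a' →
    ∃ α : arr (Φ := Φ) X 1, asrc α = a ∧ atgt α = a' ∧
      Htp 1 (f.app (op (Φ.D 1)) α) β

/-- `Π₁(f)` is faithful. -/
def Pi1Faithful (f : X ⟶ Y) : Prop :=
  ∀ (a a' : arr (Φ := Φ) X 0) (α α' : arr (Φ := Φ) X 1),
    asrc α = a → atgt α = a' → asrc α' = a → atgt α' = a' →
    Htp 1 (f.app (op (Φ.D 1)) α) (f.app (op (Φ.D 1)) α') → Htp 1 α α'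

/-- `Π₁(f)` is essentially surjective (in a groupoid, an object is isomorphic to
`f(a)` iff there is a `1`-arrow connecting them). -/
def Pi1EssSurj (f : X ⟶ Y) : Prop :=
  ∀ b : arr (Φ := Φ) Y 0, ∃ a : arr (Φ := Φ) X 0,
    ∃ z : arr (Φ := Φ) Y 1, asrc z = f.app (op (Φ.D 0)) a ∧ atgt z = b

/-- The induced map `π_{m+2}(G, u, v) → π_{m+2}(H, f(u), f(v))` is surjective. -/
def PiUVSurj (f : X ⟶ Y) (m : ℕ) (u v : arr (Φ := Φ) X (m + 1)) : Prop :=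
  ∀ β : arr (Φ := Φ) Y (m + 2),
    asrc β = f.app (op (Φ.D (m + 1))) u → atgt β = f.app (op (Φ.D (m + 1))) v →
    ∃ α : arr (Φ := Φ) X (m + 2), asrc α = u ∧ atgt α = v ∧
      Htp (m + 2) (f.app (op (Φ.D (m + 2))) α) β

/-- The induced map `π_{m+2}(G, u, v) → π_{m+2}(H, f(u), f(v))` is injective. -/
def PiUVInj (f : X ⟶ Y) (m : ℕ) (u v : arr (Φ := Φ) X (m + 1)) : Prop :=
  ∀ α α' : arr (Φ := Φ) X (m + 2),
    asrc α = u → atgt α = v → asrc α' = u → atgt α' = v →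
    Htp (m + 2) (f.app (op (Φ.D (m + 2))) α) (f.app (op (Φ.D (m + 2))) α') →
    Htp (m + 2) α α'

end Stmt11

/-!
Condition (3) trivially implies (4). Conversely, injectivity in each dimension is
surjectivity one dimension up: if `f α` and `f α'` are homotopic through some `β`,
surjectivity of `π_{n+1}(G, α, α') → π_{n+1}(H, f α, f α')` lifts `β` to an arrow `α → α'`.
-/

section WeakEquivalence

variable {E : Type u} [Category.{v} E] {Φ : Coglob E} {X Y : Eᵒᵖ ⥤ Type w} {f : X ⟶ Y}

theorem htp_of_htp_app_of_piUVSurj {n : ℕ} {u v : arr (Φ := Φ) X (n + 1)}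
    (hsurj : PiUVSurj f n u v)
    (hf : Htp (n + 1) (f.app (op (Φ.D (n + 1))) u) (f.app (op (Φ.D (n + 1))) v)) :
    Htp (n + 1) u v :=
  let ⟨β, hβs, hβt⟩ := hf
  let ⟨α, hαs, hαt, _⟩ := hsurj β hβs hβt
  ⟨α, hαs, hαt⟩

theorem pi1Faithful_of_piUVSurj
    (h : ∀ u v : arr (Φ := Φ) X 1, asrc u = asrc v → atgt u = atgt v → PiUVSurj f 0 u v) :
    Pi1Faithful (Φ := Φ) f :=
  fun _ _ _ _ hs ht hs' ht' =>
    htp_of_htp_app_of_piUVSurj (h _ _ (hs.trans hs'.symm) (ht.trans ht'.symm))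

theorem piUVInj_of_piUVSurj {m : ℕ}
    (h : ∀ u v : arr (Φ := Φ) X (m + 2), asrc u = asrc v → atgt u = atgt v →
      PiUVSurj f (m + 1) u v)
    (u v : arr (Φ := Φ) X (m + 1)) : PiUVInj f m u v :=
  fun _ _ hs ht hs' ht' =>
    htp_of_htp_app_of_piUVSurj (h _ _ (hs.trans hs'.symm) (ht.trans ht'.symm))

end WeakEquivalence

theorem weak_equivalence_conditions_3_iff_4_general {E : Type u} [Category.{v} E]
    (Φ : Coglob E)
    (X Y : Eᵒᵖ ⥤ Type w)
    (f : X ⟶ Y) :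
    -- (3)
    ((Pi1Full (Φ := Φ) f ∧ Pi1Faithful (Φ := Φ) f ∧ Pi1EssSurj (Φ := Φ) f) ∧
      (∀ (m : ℕ) (u v : arr (Φ := Φ) X (m + 1)),
        asrc u = asrc v → atgt u = atgt v →
        PiUVSurj f m u v ∧ PiUVInj f m u v)) ↔
    -- (4)
    ((Pi1Full (Φ := Φ) f ∧ Pi1EssSurj (Φ := Φ) f) ∧
      (∀ (m : ℕ) (u v : arr (Φ := Φ) X (m + 1)),
        asrc u = asrc v → atgt u = atgt v → PiUVSurj f m u v)) := by
  constructor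
  · rintro ⟨⟨hfull, -, hess⟩, h⟩
    exact ⟨⟨hfull, hess⟩, fun m u v hs ht => (h m u v hs ht).1⟩
  · rintro ⟨⟨hfull, hess⟩, h⟩
    exact ⟨⟨hfull, pi1Faithful_of_piUVSurj (h 0), hess⟩,
      fun m u v hs ht => ⟨h m u v hs ht, piUVInj_of_piUVSurj (h (m + 1)) u v⟩⟩

theorem weak_equivalence_conditions_3_iff_4 {E : Type u} [Category.{v} E]
    (Φ : Coglob E) (GS : GSums Φ) (hC : GS.Contractible)
    (X Y : Eᵒᵖ ⥤ Type w) (hmX : GS.IsModel X) (hmY : GS.IsModel Y)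
    (f : X ⟶ Y) :
    -- (3)
    ((Pi1Full (Φ := Φ) f ∧ Pi1Faithful (Φ := Φ) f ∧ Pi1EssSurj (Φ := Φ) f) ∧
      (∀ (m : ℕ) (u v : arr (Φ := Φ) X (m + 1)),
        asrc u = asrc v → atgt u = atgt v →
        PiUVSurj f m u v ∧ PiUVInj f m u v)) ↔
    -- (4)
    ((Pi1Full (Φ := Φ) f ∧ Pi1EssSurj (Φ := Φ) f) ∧
      (∀ (m : ℕ) (u v : arr (Φ := Φ) X (m + 1)),
        asrc u = asrc v → atgt u = atgt v → PiUVSurj f m u v)) :=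
  weak_equivalence_conditions_3_iff_4_general Φ X Y f
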